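/- Let n ≥ 1 be an integer, let a_1, …, a_n be real numbers, and let α = (α_1, …, α_n) ∈ ℕ^n be a vector of positive integers with |α| = α_1 + ⋯ + α_n. For each j define g_j : (0, ∞) → ℂ by g_j(t) = t^{α_j - 1} e^{-i a_j t}/Γ(α_j) (so that the Laplace transform of g_j is (s + i a_j)^{-α_j}), and let f_{n,α} = g_1 * g_2 * ⋯ * g_n be the iterated convolution, where (g * h)(t) = ∫_0^t g(τ) h(t - τ) dτ. Then |f_{n,α}(t)| ≤ t^{|α| - 1}/Γ(|α|) for all t ∈ (0, ∞). -/

import Mathlib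

open scoped RealInnerProductSpace
open MeasureTheory
open scoped Classical

noncomputable section


/-- Bessel function of the first kind of real order `ν`:
`J_ν(w) = Σ_{k=0}^∞ (-1)^k/(k! Γ(k+ν+1)) (w/2)^{2k+ν}`. -/
def besselJ (ν : ℝ) (w : ℝ) : ℝ :=
  ∑' k : ℕ, (-1 : ℝ) ^ k / (k.factorial * Real.Gamma ((k : ℝ) + ν + 1)) *
    (w / 2) ^ (2 * (k : ℝ) + ν)

/-- The two-dimensional radially deformed Fourier kernel `K_a^2(z, cos θ)`,
as a function of `z ≥ 0` and the angle `θ ∈ [0, π]`: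
`K_a^2(z, cos θ) = J_0(z_a) + 2 Σ_{k=1}^∞ e^{-iπk/a} J_{2k/a}(z_a) cos(kθ)`, `z_a = (2/a) z^{a/2}`. -/
def kernelK2 (a : ℝ) (z θ : ℝ) : ℂ :=
  (besselJ 0 ((2 / a) * z ^ (a / 2)) : ℂ) +
    2 * ∑' k : ℕ,
      Complex.exp (-Complex.I * Real.pi * ((k : ℂ) + 1) / a) *
        (besselJ (2 * ((k : ℝ) + 1) / a) ((2 / a) * z ^ (a / 2)) : ℂ) *
        (Real.cos (((k : ℝ) + 1) * θ) : ℂ)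

/-- `K_a^2(x, y)` for points `x, y ∈ ℝ²`, with `K_a^2(x,y) = 1` if `x = 0` or `y = 0`. -/
def kernelK2pt (a : ℝ) (x y : EuclideanSpace ℝ (Fin 2)) : ℂ :=
  if x = 0 ∨ y = 0 then 1
  else kernelK2 a (‖x‖ * ‖y‖) (Real.arccos (⟪x, y⟫ / (‖x‖ * ‖y‖)))

/-- Gegenbauer polynomials `C_k^{(λ)}`, via the recurrence
`(k+2) C_{k+2}(ξ) = 2(k+1+λ) ξ C_{k+1}(ξ) - (k+2λ) C_k(ξ)`, `C_0 = 1`, `C_1(ξ) = 2λξ`,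
equivalent to the generating function `(1 - 2ξt + t²)^{-λ} = Σ_k C_k^{(λ)}(ξ) t^k`. -/
def gegenbauer (l : ℝ) : ℕ → ℝ → ℝ
  | 0, _ => 1
  | 1, ξ => 2 * l * ξ
  | (k + 2), ξ =>
      (2 * ((k : ℝ) + 1 + l) * ξ * gegenbauer l (k + 1) ξ -
        ((k : ℝ) + 2 * l) * gegenbauer l k ξ) / ((k : ℝ) + 2)

/-- The function `z ↦ z^{-λ} J_{2(k+λ)/a}((2/a) z^{a/2})`, extended continuously to `z = 0`. -/
def kernelTerm (a l : ℝ) (k : ℕ) (z : ℝ) : ℝ :=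
  if z = 0 then (if k = 0 then a ^ (-(2 * l / a)) / Real.Gamma (2 * l / a + 1) else 0)
  else z ^ (-l) * besselJ (2 * ((k : ℝ) + l) / a) ((2 / a) * z ^ (a / 2))

/-- The radially deformed Fourier kernel `K_a^m(z, ξ)`, `z ≥ 0`, `ξ ∈ [-1,1]`, `λ = (m-2)/2`:
for `m ≥ 3`,
`K_a^m(z,ξ) = a^{2λ/a} Γ((2λ+a)/a) Σ_k e^{-iπk/a} ((λ+k)/λ) z^{-λ} J_{2(k+λ)/a}((2/a)z^{a/2}) C_k^{(λ)}(ξ)`;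
for `m = 2` it is `kernelK2 a z (arccos ξ)`. -/
def kernelKm (a : ℝ) (m : ℕ) (z ξ : ℝ) : ℂ :=
  if m = 2 then kernelK2 a z (Real.arccos ξ)
  else
    (((a : ℝ) ^ (2 * (((m : ℝ) - 2) / 2) / a) *
        Real.Gamma ((2 * (((m : ℝ) - 2) / 2) + a) / a) : ℝ) : ℂ) *
      ∑' k : ℕ,
        Complex.exp (-Complex.I * Real.pi * (k : ℂ) / a) *
          ((((((m : ℝ) - 2) / 2) + (k : ℝ)) / (((m : ℝ) - 2) / 2) : ℝ) : ℂ) *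
          ((kernelTerm a (((m : ℝ) - 2) / 2) k z : ℝ) : ℂ) *
          ((gegenbauer (((m : ℝ) - 2) / 2) k ξ : ℝ) : ℂ)

/-- `K_a^m(x, y)` for points `x, y ∈ ℝ^m`, with value `1` when `x = 0` or `y = 0`. -/
def kernelKmPt (a : ℝ) (m : ℕ) (x y : EuclideanSpace ℝ (Fin m)) : ℂ :=
  if x = 0 ∨ y = 0 then 1
  else kernelKm a m (‖x‖ * ‖y‖) (⟪x, y⟫ / (‖x‖ * ‖y‖))

/-- The error function `erf(w) = (2/√π) ∫_0^w e^{-t²} dt` for complex `w`,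
the integral taken along the segment from `0` to `w`. -/
def cerf (w : ℂ) : ℂ :=
  (2 / Real.sqrt Real.pi : ℝ) * ∫ s in (0:ℝ)..1, w * Complex.exp (-((s : ℂ) * w) ^ 2)

/-- The complementary error function `erfc(w) = 1 - erf(w)`. -/
def cerfc (w : ℂ) : ℂ := 1 - cerf w

/-- Convolution on `(0,∞)`: `(g * h)(t) = ∫_0^t g(τ) h(t-τ) dτ`. -/
def conv (g h : ℝ → ℂ) : ℝ → ℂ := fun t => ∫ τ in (0:ℝ)..t, g τ * h (t - τ)

/-- Iterated convolution `g_1 * g_2 * ⋯ * g_n`. -/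
def iterConv : List (ℝ → ℂ) → (ℝ → ℂ)
  | [] => fun _ => 0
  | [g] => g
  | g :: gs => conv g (iterConv gs)

/-!
On `(0, ∞)` each `g_j` has modulus `k_{α_j}`, where `k_p(t) = t^{p-1}/Γ(p)` is the
Riemann–Liouville kernel, the function with Laplace transform `s^{-p}`. These kernels form a
convolution semigroup, `k_p * k_q = k_{p+q}`, which is the Beta integral. Since
`|g * h| ≤ |g| * |h|` pointwise, induction along the list bounds `|g_1 * ⋯ * g_n|` by
`k_{α_1} * ⋯ * k_{α_n} = k_{|α|}`.
-/

def gammaKernel (p : ℕ) (s : ℝ) : ℝ := s ^ (p - 1) / Real.Gamma p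

lemma gammaKernel_nonneg (p : ℕ) {s : ℝ} (hs : 0 ≤ s) : 0 ≤ gammaKernel p s :=
  div_nonneg (pow_nonneg hs _) (Real.Gamma_nonneg_of_nonneg p.cast_nonneg)

lemma norm_pow_mul_exp_div_Gamma (a : ℝ) (p : ℕ) {s : ℝ} (hs : 0 ≤ s) :
    ‖(s : ℂ) ^ (p - 1) * Complex.exp (-Complex.I * a * s) / (Real.Gamma p : ℂ)‖ =
      gammaKernel p s := by
  have hexp : ‖Complex.exp (-Complex.I * a * s)‖ = 1 := by
    rw [Complex.norm_exp]; simp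
  rw [norm_div, norm_mul, hexp, norm_pow, Complex.norm_real, Complex.norm_real, mul_one,
    Real.norm_of_nonneg hs, Real.norm_of_nonneg (Real.Gamma_nonneg_of_nonneg p.cast_nonneg),
    gammaKernel]

lemma integral_pow_mul_sub_pow {p q : ℕ} (hp : 1 ≤ p) (hq : 1 ≤ q) {t : ℝ} (ht : 0 < t) :
    ∫ τ in (0:ℝ)..t, τ ^ (p - 1) * (t - τ) ^ (q - 1) =
      Real.Gamma p * Real.Gamma q / Real.Gamma (p + q : ℕ) * t ^ (p + q - 1) := by
  have hscaled := Complex.betaIntegral_scaled p q ht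
  rw [← Nat.cast_pred hp, ← Nat.cast_pred hq, ← Nat.cast_add, ← Nat.cast_pred (by omega)]
    at hscaled
  simp only [Complex.cpow_natCast] at hscaled
  have hbeta := Complex.Gamma_mul_Gamma_eq_betaIntegral (s := p) (t := q)
    (by simp; omega) (by simp; omega)
  have hΓc (n : ℕ) : Complex.Gamma n = Real.Gamma n := by
    rw [← Complex.ofReal_natCast, Complex.Gamma_ofReal]
  rw [← Nat.cast_add, hΓc, hΓc, hΓc] at hbeta
  apply Complex.ofReal_injective
  rw [← intervalIntegral.integral_ofReal]
  push_cast at hscaled hbeta ⊢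
  have hΓ : (Real.Gamma (p + q) : ℂ) ≠ 0 :=
    Complex.ofReal_ne_zero.mpr (Real.Gamma_pos_of_pos (by positivity)).ne'
  rw [hscaled, hbeta, mul_div_cancel_left₀ _ hΓ, mul_comm]

lemma integral_gammaKernel_mul_gammaKernel {p q : ℕ} (hp : 1 ≤ p) (hq : 1 ≤ q) {t : ℝ}
    (ht : 0 < t) :
    ∫ τ in (0:ℝ)..t, gammaKernel p τ * gammaKernel q (t - τ) = gammaKernel (p + q) t := by
  simp only [gammaKernel, div_mul_div_comm, intervalIntegral.integral_div,
    integral_pow_mul_sub_pow hp hq ht]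
  have := Real.Gamma_pos_of_pos (show (0:ℝ) < p by positivity)
  have := Real.Gamma_pos_of_pos (show (0:ℝ) < q by positivity)
  field_simp

lemma norm_conv_le_gammaKernel {g h : ℝ → ℂ} {p q : ℕ} (hp : 1 ≤ p) (hq : 1 ≤ q)
    (hg : ∀ s, 0 < s → ‖g s‖ ≤ gammaKernel p s)
    (hh : ∀ s, 0 < s → ‖h s‖ ≤ gammaKernel q s)
    {t : ℝ} (ht : 0 < t) : ‖conv g h t‖ ≤ gammaKernel (p + q) t := by
  have hbound : ∀ᵐ τ ∂volume.restrict (Set.uIoc 0 t),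
      ‖g τ * h (t - τ)‖ ≤ gammaKernel p τ * gammaKernel q (t - τ) := by
    rw [Set.uIoc_of_le ht.le, ← Measure.restrict_congr_set Ioo_ae_eq_Ioc]
    filter_upwards [ae_restrict_mem measurableSet_Ioo] with τ ⟨hτ0, hτt⟩
    rw [norm_mul]
    exact mul_le_mul (hg τ hτ0) (hh _ (sub_pos.2 hτt)) (norm_nonneg _)
      (gammaKernel_nonneg _ hτ0.le)
  have hint : IntervalIntegrable (fun τ => gammaKernel p τ * gammaKernel q (t - τ)) volume 0 t :=
    (by unfold gammaKernel; fun_prop : Continuous _).intervalIntegrable _ _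
  calc ‖conv g h t‖ ≤ |∫ τ in (0:ℝ)..t, gammaKernel p τ * gammaKernel q (t - τ)| :=
        intervalIntegral.norm_integral_le_abs_of_norm_le hbound hint
    _ = gammaKernel (p + q) t := by
        rw [integral_gammaKernel_mul_gammaKernel hp hq ht,
          abs_of_nonneg (gammaKernel_nonneg _ ht.le)]

lemma iterConv_cons_of_ne_nil (g : ℝ → ℂ) {gs : List (ℝ → ℂ)} (hgs : gs ≠ []) :
    iterConv (g :: gs) = conv g (iterConv gs) := by
  obtain ⟨h, l, rfl⟩ := List.exists_cons_of_ne_nil hgs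
  rfl

lemma norm_iterConv_ofFn_le {n : ℕ} (g : Fin (n + 1) → ℝ → ℂ) (p : Fin (n + 1) → ℕ)
    (hp : ∀ j, 1 ≤ p j) (hg : ∀ j s, 0 < s → ‖g j s‖ ≤ gammaKernel (p j) s) {t : ℝ}
    (ht : 0 < t) : ‖iterConv (List.ofFn g) t‖ ≤ gammaKernel (∑ j, p j) t := by
  induction n generalizing t with
  | zero => simpa [iterConv] using hg 0 t ht
  | succ n ih =>
    rw [List.ofFn_succ, iterConv_cons_of_ne_nil _ (by simp), Fin.sum_univ_succ]
    refine norm_conv_le_gammaKernel (hp 0) ?_ (hg 0)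
      (fun s hs => ih _ _ (fun j => hp j.succ) (fun j => hg j.succ) hs) ht
    exact (hp 1).trans (Finset.single_le_sum (f := fun j : Fin (n + 1) => p j.succ)
      (fun _ _ => Nat.zero_le _) (Finset.mem_univ 0))

/-- Bound for the iterated convolution of the functions `g_j(t) = t^{α_j-1} e^{-i a_j t}/Γ(α_j)`
(whose Laplace transforms are `(s + i a_j)^{-α_j}`):
`|f_{n,α}(t)| ≤ t^{|α|-1}/Γ(|α|)` for all `t > 0`. -/
theorem iterConv_bound (n : ℕ) (hn : 1 ≤ n) (a : Fin n → ℝ) (α : Fin n → ℕ)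
    (hα : ∀ j, 1 ≤ α j) (t : ℝ) (ht : 0 < t) :
    ‖(iterConv
          (List.ofFn fun j => fun s : ℝ =>
            (s : ℂ) ^ (α j - 1) * Complex.exp (-Complex.I * (a j : ℂ) * (s : ℂ)) /
              ((Real.Gamma (α j) : ℝ) : ℂ))
          t)‖ ≤
      t ^ ((∑ j, α j) - 1) / Real.Gamma ((∑ j, α j : ℕ) : ℝ) := by
  obtain ⟨m, rfl⟩ : ∃ m, n = m + 1 := ⟨n - 1, by omega⟩
  exact norm_iterConv_ofFn_le _ α hα
    (fun j s hs => (norm_pow_mul_exp_div_Gamma (a j) (α j) hs.le).le) ht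

end
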